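/- Let L > 0 and suppose (μₙ) is a sequence of reals with μₙ = π(n−1)/L + δₙ, |δₙ| ≤ π/(4L), and μₙ³·sin(μₙL) = O(μₙ²) as n → ∞. Then δₙ = O(1/n); that is, there exist C and N with |δₙ| ≤ C/n for all n ≥ N. -/
import Mathlib


/-- if `μₙ = π(n−1)/L + δₙ` with `|δₙ| ≤ π/(4L)` and
`μₙ³ sin(μₙL) = O(μₙ²)`, then `δₙ = O(1/n)`. -/
theorem stmt14 (L : ℝ) (hL : 0 < L) (μ δ : ℕ → ℝ)
    (hμ : ∀ n : ℕ, μ n = Real.pi * ((n : ℝ) - 1) / L + δ n)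
    (hδ : ∀ n : ℕ, |δ n| ≤ Real.pi / (4 * L))
    (hbig : ∃ (C₀ : ℝ) (N₀ : ℕ), ∀ n ≥ N₀,
      |(μ n) ^ 3 * Real.sin (μ n * L)| ≤ C₀ * (μ n) ^ 2) :
    ∃ (C : ℝ) (N : ℕ), ∀ n ≥ N, |δ n| ≤ C / n := by
  obtain ⟨C₀, N₀, hC₀⟩ := hbig
  have πpos := Real.pi_pos
  refine ⟨C₀, max N₀ 3, fun n hn => ?_⟩
  have hn₀ : n ≥ N₀ := le_trans (le_max_left _ _) hn
  have hn3 : (3 : ℝ) ≤ (n : ℝ) := by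
    exact_mod_cast le_trans (le_max_right _ _) hn
  have hδn := hδ n
  have habs : |δ n| * L ≤ Real.pi / 4 := by
    have := mul_le_mul_of_nonneg_right hδn hL.le
    calc |δ n| * L ≤ Real.pi / (4 * L) * L := this
    _ = Real.pi / 4 := by field_simp
  -- lower bound on μ n
  have hμn : Real.pi * (n : ℝ) / (2 * L) ≤ μ n := by
    rw [hμ n]
    have h1 : -(Real.pi / (4 * L)) ≤ δ n := neg_le_of_abs_le hδn
    rw [div_le_iff₀ (by positivity)]
    have h2 : Real.pi * ((n : ℝ) - 1) / L * (2 * L) = 2 * Real.pi * ((n : ℝ) - 1) := by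
      field_simp
    have h3 : Real.pi / (4 * L) * (2 * L) = Real.pi / 2 := by field_simp; ring
    nlinarith [mul_le_mul_of_nonneg_right h1 (by positivity : (0:ℝ) ≤ 2 * L)]
  have hμpos : 0 < μ n := lt_of_lt_of_le (by positivity) hμn
  -- |sin (μ n * L)| = |sin (δ n * L)|
  have hkey : μ n * L = δ n * L + (((n : ℤ) - 1 : ℤ) : ℝ) * Real.pi := by
    rw [hμ n]; push_cast; field_simp; ring
  have hsin : |Real.sin (μ n * L)| = |Real.sin (δ n * L)| := by
    rw [hkey, Real.sin_add_int_mul_pi]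
    rcases Int.even_or_odd ((n : ℤ) - 1) with h | h
    · rw [h.neg_one_zpow]; simp
    · rw [h.neg_one_zpow]; simp
  -- Jordan inequality
  have hjordan : 2 / Real.pi * |δ n * L| ≤ |Real.sin (δ n * L)| := by
    apply Real.mul_abs_le_abs_sin
    rw [abs_mul, abs_of_pos hL]
    linarith
  -- from hbig
  have h1 : μ n * |Real.sin (μ n * L)| ≤ C₀ := by
    have := hC₀ n hn₀
    rw [abs_mul, abs_of_pos (by positivity : (0:ℝ) < μ n ^ 3)] at this
    nlinarith [this, pow_pos hμpos 2, abs_nonneg (Real.sin (μ n * L))]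
  rw [hsin] at h1
  rw [abs_mul, abs_of_pos hL] at hjordan
  have h2 : 2 / Real.pi * (|δ n| * L) * μ n ≤ C₀ := by
    calc 2 / Real.pi * (|δ n| * L) * μ n
        ≤ |Real.sin (δ n * L)| * μ n :=
          mul_le_mul_of_nonneg_right hjordan hμpos.le
      _ = μ n * |Real.sin (δ n * L)| := mul_comm _ _
      _ ≤ C₀ := h1
  rw [le_div_iff₀ (by linarith : (0:ℝ) < (n:ℝ))]
  have h3 : 2 / Real.pi * (|δ n| * L) * (Real.pi * (n : ℝ) / (2 * L)) = |δ n| * n := by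
    field_simp
  calc |δ n| * n = 2 / Real.pi * (|δ n| * L) * (Real.pi * (n : ℝ) / (2 * L)) := h3.symm
    _ ≤ 2 / Real.pi * (|δ n| * L) * μ n := by
        apply mul_le_mul_of_nonneg_left hμn (by positivity)
    _ ≤ C₀ := h2
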